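/- For m = -2 the solution of θ' + (1+m)cos θ = 0, z' = sin θ, y' = e^z cos θ with θ(0) = z(0) = y(0) = 0 is θ(s) = 2·arctan(tanh(s/2)), z(s) = log(cosh s), y(s) = s; hence the generating curve of the invariant Weingarten surface with κ₁ = -2κ₂ is the graph of z(y) = log(cosh y). -/

import Mathlib

/-!
The equation for θ reduces to the autonomous ODE θ' = cos θ, whose right-hand side is Lipschitz,
so θ is determined by θ(0) = 0. The Gudermannian function gd(s) = 2 arctan (tanh (s / 2)) solves
it: by the half-angle formulas cos (gd s) = 1 / cosh s and sin (gd s) = tanh s, and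
gd' = 1 / cosh. Then z' = tanh forces z = log cosh, and y' = e^z cos θ = cosh s / cosh s = 1
forces y = id.
-/

open Real

namespace Real

theorem hasDerivAt_tanh (x : ℝ) : HasDerivAt tanh (1 - tanh x ^ 2) x := by
  have hc := (cosh_pos x).ne'
  have h := (hasDerivAt_sinh x).div (hasDerivAt_cosh x) hc
  rw [show tanh = sinh / cosh from funext tanh_eq_sinh_div_cosh]
  refine h.congr_deriv ?_
  simp only [Pi.div_apply]
  field_simp

theorem cos_two_mul_arctan (t : ℝ) : cos (2 * arctan t) = (1 - t ^ 2) / (1 + t ^ 2) := by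
  rw [cos_two_mul, cos_sq_arctan]
  field_simp
  ring

theorem sin_two_mul_arctan (t : ℝ) : sin (2 * arctan t) = 2 * t / (1 + t ^ 2) := by
  rw [sin_eq_two_mul_tan_half_div_one_add_tan_half_sq, mul_div_cancel_left₀ _ two_ne_zero,
    tan_arctan]

theorem tanh_two_mul (x : ℝ) : tanh (2 * x) = 2 * tanh x / (1 + tanh x ^ 2) := by
  have hc := (cosh_pos x).ne'
  rw [tanh_eq_sinh_div_cosh, tanh_eq_sinh_div_cosh, sinh_two_mul, cosh_two_mul]
  field_simp

theorem inv_cosh_two_mul (x : ℝ) : (cosh (2 * x))⁻¹ = (1 - tanh x ^ 2) / (1 + tanh x ^ 2) := by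
  have hc := (cosh_pos x).ne'
  rw [tanh_eq_sinh_div_cosh, cosh_two_mul]
  field_simp
  rw [cosh_sq_sub_sinh_sq]

end Real

noncomputable def gudermannian (x : ℝ) : ℝ := 2 * arctan (tanh (x / 2))

theorem gudermannian_zero : gudermannian 0 = 0 := by simp [gudermannian]

theorem sin_gudermannian (x : ℝ) : sin (gudermannian x) = tanh x := by
  rw [gudermannian, sin_two_mul_arctan, ← tanh_two_mul, mul_div_cancel₀ _ two_ne_zero]

theorem cos_gudermannian (x : ℝ) : cos (gudermannian x) = (cosh x)⁻¹ := by
  rw [gudermannian, cos_two_mul_arctan, ← inv_cosh_two_mul, mul_div_cancel₀ _ two_ne_zero]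

theorem hasDerivAt_gudermannian (x : ℝ) : HasDerivAt gudermannian (cos (gudermannian x)) x := by
  have hhalf : HasDerivAt (fun y : ℝ => y / 2) (1 / 2) x := (hasDerivAt_id x).div_const 2
  refine ((((hasDerivAt_tanh (x / 2)).comp x hhalf).arctan).const_mul 2).congr_deriv ?_
  simp only [gudermannian, cos_two_mul_arctan, Function.comp_apply]
  field_simp

theorem eq_of_hasDerivAt_of_lipschitzWith {E : Type*} [NormedAddCommGroup E] [NormedSpace ℝ E]
    {v : ℝ → E → E} {K : NNReal} (hv : ∀ t, LipschitzWith K (v t)) {f g : ℝ → E}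
    (hf : ∀ t, HasDerivAt f (v t (f t)) t) (hg : ∀ t, HasDerivAt g (v t (g t)) t) {t₀ : ℝ}
    (h : f t₀ = g t₀) : f = g :=
  ODE_solution_unique_univ (s := fun _ => Set.univ) (fun t => (hv t).lipschitzOnWith)
    (fun t => ⟨hf t, trivial⟩) (fun t => ⟨hg t, trivial⟩) h

theorem stmt_17 (θ z y : ℝ → ℝ)
    (hθ : ∀ s, HasDerivAt θ (-(1 + (-2 : ℝ)) * cos (θ s)) s)
    (hz : ∀ s, HasDerivAt z (sin (θ s)) s)
    (hy : ∀ s, HasDerivAt y (exp (z s) * cos (θ s)) s)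
    (hθ0 : θ 0 = 0) (hz0 : z 0 = 0) (hy0 : y 0 = 0) :
    (∀ s, θ s = 2 * arctan (tanh (s / 2))) ∧
    (∀ s, z s = log (cosh s)) ∧
    (∀ s, y s = s) ∧
    (∀ s, z s = log (cosh (y s))) := by
  obtain rfl : θ = gudermannian := by
    refine eq_of_hasDerivAt_of_lipschitzWith (fun _ => lipschitzWith_cos) (fun s => ?_)
      hasDerivAt_gudermannian (t₀ := 0) (by rw [hθ0, gudermannian_zero])
    refine (hθ s).congr_deriv ?_
    norm_num
  obtain rfl : z = fun s => log (cosh s) := by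
    refine eq_of_hasDerivAt_of_lipschitzWith (v := fun s _ => sin (gudermannian s))
      (fun _ => LipschitzWith.const _) hz (fun s => ?_) (t₀ := 0) (by simp [hz0])
    rw [sin_gudermannian, tanh_eq_sinh_div_cosh]
    exact (hasDerivAt_cosh s).log (cosh_pos s).ne'
  obtain rfl : y = id := by
    refine eq_of_hasDerivAt_of_lipschitzWith
      (v := fun s _ => exp (log (cosh s)) * cos (gudermannian s)) (fun _ => LipschitzWith.const _)
      hy (fun s => ?_) (t₀ := 0) hy0
    rw [exp_log (cosh_pos s), cos_gudermannian, mul_inv_cancel₀ (cosh_pos s).ne']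
    exact hasDerivAt_id s
  exact ⟨fun _ => rfl, fun _ => rfl, fun _ => rfl, fun _ => rfl⟩
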